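/- arXiv:1001.4510 — 3 statements merged into one kernel-verified Lean document; each statement's English description precedes it below -/
import Mathlib

section
/- Let G be a countable group, let H be a complex Hilbert space, and let (f_g)_{g ∈ G} be a Bessel sequence in H with the property that for any g₁, g₂, h₁, h₂ ∈ G satisfying g₁g₂⁻¹ = h₁h₂⁻¹ one has ⟨f_{g₁}, f_{g₂}⟩ = ⟨f_{h₁}, f_{h₂}⟩. If G can be partitioned into finitely many subsets A₁, …, A_L such that for each 1 ≤ l ≤ L the family (f_g)_{g ∈ A_l} is a Riesz basic sequence, then G can be partitioned into K syndetic subsets S₁, …, S_K with K ≤ L such that for each 1 ≤ k ≤ K the family (f_g)_{g ∈ S_k} is a Riesz basic sequence. -/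
open scoped InnerProductSpace

/-- `(f i)_{i ∈ I}` is a Bessel sequence: there is `B > 0` with
`‖Σ aᵢ fᵢ‖² ≤ B Σ |aᵢ|²` for every finitely supported family of scalars. -/
def IsBesselSequence {ι : Type*} {H : Type*} [NormedAddCommGroup H]
    [InnerProductSpace ℂ H] (f : ι → H) : Prop :=
  ∃ B > (0 : ℝ), ∀ a : ι →₀ ℂ,
    ‖a.sum fun i c => c • f i‖ ^ 2 ≤ B * ∑ i ∈ a.support, ‖a i‖ ^ 2

/-- `(f i)_{i ∈ A}` is a Riesz basic sequence: there are `c, C > 0` with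
`c Σ |aᵢ|² ≤ ‖Σ aᵢ fᵢ‖² ≤ C Σ |aᵢ|²` for every finitely supported family of
scalars supported in `A`. -/
def IsRieszBasicSequence {ι : Type*} {H : Type*} [NormedAddCommGroup H]
    [InnerProductSpace ℂ H] (f : ι → H) (A : Set ι) : Prop :=
  ∃ c > (0 : ℝ), ∃ C > (0 : ℝ), ∀ a : ι →₀ ℂ, (a.support : Set ι) ⊆ A →
    c * ∑ i ∈ a.support, ‖a i‖ ^ 2 ≤ ‖a.sum fun i c => c • f i‖ ^ 2 ∧
    ‖a.sum fun i c => c • f i‖ ^ 2 ≤ C * ∑ i ∈ a.support, ‖a i‖ ^ 2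

/-- `S ⊆ G` is syndetic: finitely many left translates of `S` cover `G`. -/
def IsSyndetic {G : Type*} [Group G] (S : Set G) : Prop :=
  ∃ F : Finset G, ∀ g : G, ∃ f ∈ F, f * g ∈ S

/-!
Call a property `P` of subsets of `G` *finitely translation closed* if `P A` implies `P B`
whenever every finite subset of `B` is carried into `A` by some right translation. Being a
Riesz basic sequence is such a property: the invariance of the Gram matrix makes the synthesis
operator isometric under right translation, so the Riesz bounds of `A` pass to `B`.

For such a `P`, if a piece `A j` of a finite partition into `P`-sets is not syndetic, pick for
every finite `F ⊆ G` an element `g_F` with `F g_F ∩ A j = ∅`, and take the limits of the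
translates `A l g_F⁻¹` along an ultrafilter finer than `atTop` on `Finset G`. These limits
again form a partition into `P`-sets, and the limit of `A j` is empty, so the number of pieces
drops. Induction on the number of pieces ends with a partition into syndetic `P`-sets.
-/

open Filter Function

def IsFinitelyTranslationClosed {G : Type*} [Group G] (P : Set G → Prop) : Prop :=
  ∀ A B, P A → (∀ s : Finset G, ↑s ⊆ B → ∃ g, ∀ x ∈ s, x * g ∈ A) → P B

theorem norm_finsuppSum_smul_eq_of_inner_eq {ι 𝕜 E : Type*} [RCLike 𝕜] [NormedAddCommGroup E]
    [InnerProductSpace 𝕜 E] {u v : ι → E} (h : ∀ x y, ⟪u x, u y⟫_𝕜 = ⟪v x, v y⟫_𝕜)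
    (a : ι →₀ 𝕜) :
    ‖a.sum fun i c => c • u i‖ = ‖a.sum fun i c => c • v i‖ := by
  have hinner : ⟪a.sum fun i c => c • u i, a.sum fun i c => c • u i⟫_𝕜 =
      ⟪a.sum fun i c => c • v i, a.sum fun i c => c • v i⟫_𝕜 := by
    simp only [Finsupp.sum, sum_inner, inner_sum, inner_smul_left, inner_smul_right, h]
  rw [inner_self_eq_norm_sq_to_K, inner_self_eq_norm_sq_to_K] at hinner
  exact (pow_left_inj₀ (norm_nonneg _) (norm_nonneg _) two_ne_zero).mp (mod_cast hinner)

theorem isFinitelyTranslationClosed_isRieszBasicSequence {G H : Type*} [Group G]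
    [NormedAddCommGroup H] [InnerProductSpace ℂ H] {f : G → H}
    (hf : ∀ x y g : G, ⟪f (x * g), f (y * g)⟫_ℂ = ⟪f x, f y⟫_ℂ) :
    IsFinitelyTranslationClosed (IsRieszBasicSequence f) := by
  intro A B hA hB
  obtain ⟨c, hc, C, hC, hA⟩ := hA
  refine ⟨c, hc, C, hC, fun a ha => ?_⟩
  obtain ⟨g, hg⟩ := hB a.support ha
  set a' := a.equivMapDomain (Equiv.mulRight g)
  have hsupp : (a'.support : Set G) ⊆ A := by
    intro y hy
    obtain ⟨x, hx, rfl⟩ := Finset.mem_map.mp hy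
    exact hg x hx
  have hsq : ∑ i ∈ a'.support, ‖a' i‖ ^ 2 = ∑ i ∈ a.support, ‖a i‖ ^ 2 :=
    Finsupp.sum_equivMapDomain _ a fun _ c => ‖c‖ ^ 2
  have hnorm : ‖a'.sum fun i c => c • f i‖ = ‖a.sum fun i c => c • f i‖ := by
    rw [Finsupp.sum_equivMapDomain]
    exact norm_finsuppSum_smul_eq_of_inner_eq (fun x y => hf x y g) a
  rw [← hsq, ← hnorm]
  exact hA a' hsupp

section TranslateLimit

variable {G ι : Type*} [Group G]

def translateLimit (U : Ultrafilter ι) (g : ι → G) (A : Set G) : Set G :=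
  {x | ∀ᶠ i in U, x * g i ∈ A}

variable {U : Ultrafilter ι} {g : ι → G}

theorem disjoint_translateLimit {A B : Set G} (h : Disjoint A B) :
    Disjoint (translateLimit U g A) (translateLimit U g B) :=
  Set.disjoint_left.mpr fun _ hA hB =>
    let ⟨_, hiA, hiB⟩ := (hA.and hB).exists
    Set.disjoint_left.mp h hiA hiB

theorem iUnion_translateLimit {κ : Type*} [Finite κ] {A : κ → Set G}
    (h : ⋃ k, A k = Set.univ) : ⋃ k, translateLimit U g (A k) = Set.univ := by
  refine Set.eq_univ_of_forall fun x => Set.mem_iUnion.mpr ?_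
  refine Ultrafilter.eventually_exists_iff.mp (Eventually.of_forall fun i => ?_)
  exact Set.mem_iUnion.mp (h ▸ Set.mem_univ (x * g i))

theorem exists_forall_mul_mem_of_subset_translateLimit {A : Set G} {s : Finset G}
    (hs : ↑s ⊆ translateLimit U g A) : ∃ h, ∀ x ∈ s, x * h ∈ A :=
  let ⟨i, hi⟩ := ((eventually_all_finset s).mpr hs).exists
  ⟨g i, hi⟩

theorem not_isSyndetic_iff {S : Set G} :
    ¬IsSyndetic S ↔ ∀ F : Finset G, ∃ g, ∀ x ∈ F, x * g ∉ S := by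
  simp [IsSyndetic]

theorem exists_translateLimit_eq_empty_of_not_isSyndetic {S : Set G} (hS : ¬IsSyndetic S) :
    ∃ (U : Ultrafilter (Finset G)) (g : Finset G → G), translateLimit U g S = ∅ := by
  choose g hg using not_isSyndetic_iff.mp hS
  set U := Ultrafilter.of (atTop : Filter (Finset G))
  refine ⟨U, g, Set.eq_empty_of_forall_notMem fun x hx => ?_⟩
  have hxF : ∀ᶠ F : Finset G in U, x ∈ F :=
    Ultrafilter.of_le atTop <| (eventually_ge_atTop {x}).mono fun _ hF =>
      Finset.singleton_subset_iff.mp hF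
  obtain ⟨F, hF, hxF⟩ := (hx.and hxF).exists
  exact hg F x hxF hF

end TranslateLimit

section SyndeticPartition

variable {G : Type*} [Group G] {P : Set G → Prop}

theorem IsFinitelyTranslationClosed.exists_partition_of_not_isSyndetic
    (hP : IsFinitelyTranslationClosed P) {m : ℕ} {A : Fin (m + 1) → Set G}
    (hdisj : Pairwise (Disjoint on A)) (hcover : ⋃ l, A l = Set.univ) (hA : ∀ l, P (A l))
    {j : Fin (m + 1)} (hj : ¬IsSyndetic (A j)) :
    ∃ A' : Fin m → Set G, Pairwise (Disjoint on A') ∧ ⋃ k, A' k = Set.univ ∧ ∀ k, P (A' k) := by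
  obtain ⟨U, g, hUj⟩ := exists_translateLimit_eq_empty_of_not_isSyndetic hj
  refine ⟨fun k => translateLimit U g (A (j.succAbove k)), fun k k' hk =>
    disjoint_translateLimit (hdisj (Fin.succAbove_right_injective.ne hk)), ?_,
    fun k => hP _ _ (hA _) fun _ => exists_forall_mul_mem_of_subset_translateLimit⟩
  refine Set.eq_univ_of_forall fun x => ?_
  obtain ⟨l, hl⟩ := Set.mem_iUnion.mp (iUnion_translateLimit (U := U) (g := g) hcover ▸
    Set.mem_univ x)
  have hlj : l ≠ j := by
    rintro rfl
    simp [hUj] at hl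
  obtain ⟨k, rfl⟩ := Fin.exists_succAbove_eq hlj
  exact Set.mem_iUnion.mpr ⟨k, hl⟩

theorem IsFinitelyTranslationClosed.exists_syndetic_partition
    (hP : IsFinitelyTranslationClosed P) (L : ℕ) (A : Fin L → Set G)
    (hdisj : Pairwise (Disjoint on A)) (hcover : ⋃ l, A l = Set.univ) (hA : ∀ l, P (A l)) :
    ∃ K ≤ L, ∃ S : Fin K → Set G, Pairwise (Disjoint on S) ∧ ⋃ k, S k = Set.univ ∧
      ∀ k, IsSyndetic (S k) ∧ P (S k) := by
  induction L with
  | zero => exact ⟨0, le_rfl, A, hdisj, hcover, fun k => k.elim0⟩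
  | succ m ih =>
    by_cases hsynd : ∀ l, IsSyndetic (A l)
    · exact ⟨m + 1, le_rfl, A, hdisj, hcover, fun l => ⟨hsynd l, hA l⟩⟩
    obtain ⟨j, hj⟩ := not_forall.mp hsynd
    obtain ⟨A', hdisj', hcover', hA'⟩ := hP.exists_partition_of_not_isSyndetic hdisj hcover hA hj
    obtain ⟨K, hK, S, hS⟩ := ih A' hdisj' hcover' hA'
    exact ⟨K, hK.trans m.le_succ, S, hS⟩

end SyndeticPartition

theorem syndetic_riesz_partition_of_invariant_bessel_general
    {G : Type*} [Group G]
    {H : Type*} [NormedAddCommGroup H] [InnerProductSpace ℂ H]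
    (f : G → H)
    (hinv : ∀ g₁ g₂ h₁ h₂ : G, g₁ * g₂⁻¹ = h₁ * h₂⁻¹ →
      ⟪f g₁, f g₂⟫_ℂ = ⟪f h₁, f h₂⟫_ℂ)
    (L : ℕ) (A : Fin L → Set G)
    (hdisj : ∀ l l' : Fin L, l ≠ l' → Disjoint (A l) (A l'))
    (hcover : (⋃ l, A l) = Set.univ)
    (hriesz : ∀ l : Fin L, IsRieszBasicSequence f (A l)) :
    ∃ K : ℕ, K ≤ L ∧ ∃ S : Fin K → Set G,
      (∀ k k' : Fin K, k ≠ k' → Disjoint (S k) (S k')) ∧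
      (⋃ k, S k) = Set.univ ∧
      ∀ k : Fin K, IsSyndetic (S k) ∧ IsRieszBasicSequence f (S k) := by
  have hright : ∀ x y g : G, ⟪f (x * g), f (y * g)⟫_ℂ = ⟪f x, f y⟫_ℂ :=
    fun x y g => hinv _ _ _ _ (by group)
  obtain ⟨K, hK, S, hdisjS, hcoverS, hS⟩ :=
    (isFinitelyTranslationClosed_isRieszBasicSequence hright).exists_syndetic_partition L A
      (fun _ _ => hdisj _ _) hcover hriesz
  exact ⟨K, hK, S, fun _ _ hk => hdisjS hk, hcoverS, hS⟩

theorem syndetic_riesz_partition_of_invariant_bessel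
    {G : Type*} [Group G] [Countable G]
    {H : Type*} [NormedAddCommGroup H] [InnerProductSpace ℂ H]
    [CompleteSpace H]
    (f : G → H) (hBessel : IsBesselSequence f)
    (hinv : ∀ g₁ g₂ h₁ h₂ : G, g₁ * g₂⁻¹ = h₁ * h₂⁻¹ →
      ⟪f g₁, f g₂⟫_ℂ = ⟪f h₁, f h₂⟫_ℂ)
    (L : ℕ) (A : Fin L → Set G)
    (hdisj : ∀ l l' : Fin L, l ≠ l' → Disjoint (A l) (A l'))
    (hcover : (⋃ l, A l) = Set.univ)
    (hriesz : ∀ l : Fin L, IsRieszBasicSequence f (A l)) :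
    ∃ K : ℕ, K ≤ L ∧ ∃ S : Fin K → Set G,
      (∀ k k' : Fin K, k ≠ k' → Disjoint (S k) (S k')) ∧
      (⋃ k, S k) = Set.univ ∧
      ∀ k : Fin K, IsSyndetic (S k) ∧ IsRieszBasicSequence f (S k) :=
  syndetic_riesz_partition_of_invariant_bessel_general f hinv L A hdisj hcover hriesz
end

section
/- Let N be a natural number and let A ⊆ [0,1]^N be a Lebesgue measurable set of positive Lebesgue measure. For n ∈ ℤ^N let f_n ∈ L²(A) be given by f_n(t) = e^{2πi n·t} restricted to A, where n·t = n₁t₁ + ⋯ + n_N t_N. If ℤ^N can be partitioned into finitely many subsets A₁, …, A_L such that for each 1 ≤ l ≤ L the family (f_n)_{n ∈ A_l} is a Riesz basic sequence in L²(A), then ℤ^N can be partitioned into K syndetic subsets S₁, …, S_K with K ≤ L such that for each 1 ≤ k ≤ K the family (f_n)_{n ∈ S_k} is a Riesz basic sequence in L²(A). -/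
open MeasureTheory
open scoped InnerProductSpace

/-- `S` is a syndetic subset of the additive group `ℤ^N`. -/
def IsSyndeticAdd {N : ℕ} (S : Set (Fin N → ℤ)) : Prop :=
  ∃ F : Finset (Fin N → ℤ), ∀ g : Fin N → ℤ, ∃ f ∈ F, f + g ∈ S

open Filter

/-!
Colour `ℤ^N` by the index of the Riesz family containing each point. The shift orbit closure of
this colouring in the compact space of all colourings contains a minimal subshift; a colouring `y`
from it has syndetic colour classes, and every finite pattern of `y` is a translate of a pattern of
the original colouring. Since `‖Σ aₙ f_{n+g}‖ = ‖Σ aₙ fₙ‖` (multiplication by the unimodular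
function `e^{2πi g·t}`), every finite subfamily of a colour class of `y` is a translate of a finite
subfamily of some `B l` and inherits its Riesz bounds.
-/

section Shift

variable {G α : Type*} [AddMonoid G]

def shift (g : G) (z : G → α) : G → α := fun x => z (x + g)

@[simp]
lemma shift_apply (g x : G) (z : G → α) : shift g z x = z (x + g) := rfl

@[simp]
lemma shift_zero (z : G → α) : shift 0 z = z := by
  funext x; simp

lemma shift_shift (g h : G) (z : G → α) : shift g (shift h z) = shift (g + h) z := by
  funext x; simp [add_assoc]

variable [TopologicalSpace α]

lemma continuous_shift (g : G) : Continuous (shift (α := α) g) :=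
  continuous_pi fun x => continuous_apply (x + g)

def IsSubshift (Y : Set (G → α)) : Prop :=
  IsClosed Y ∧ ∀ g, ∀ z ∈ Y, shift g z ∈ Y

lemma isSubshift_closure_range_shift (χ : G → α) :
    IsSubshift (closure (Set.range fun g : G => shift g χ)) := by
  refine ⟨isClosed_closure, fun g z hz => ?_⟩
  have horbit : shift g '' Set.range (fun h : G => shift h χ) ⊆ Set.range fun h : G => shift h χ := by
    rintro _ ⟨_, ⟨h, rfl⟩, rfl⟩
    exact ⟨g + h, (shift_shift g h χ).symm⟩
  exact closure_mono horbit (image_closure_subset_closure_image (continuous_shift g) ⟨z, hz, rfl⟩)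

lemma IsSubshift.exists_minimal [CompactSpace α] {X : Set (G → α)} (hX : IsSubshift X)
    (hne : X.Nonempty) : ∃ M ⊆ X, Minimal (fun Y => Y.Nonempty ∧ IsSubshift Y) M := by
  refine zorn_superset_nonempty _ (fun c hc hchain hcne => ?_) X ⟨hne, hX⟩
  refine ⟨⋂₀ c, ⟨?_, isClosed_sInter fun Y hY => (hc hY).2.1,
    fun g z hz Y hY => (hc hY).2.2 g z (hz Y hY)⟩, fun Y hY => Set.sInter_subset_of_mem hY⟩
  have : Nonempty c := hcne.to_subtype
  rw [Set.sInter_eq_iInter]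
  exact IsCompact.nonempty_iInter_of_directed_nonempty_isCompact_isClosed _
    (fun Y Z => (hchain.total Y.2 Z.2).elim (fun h => ⟨Y, subset_rfl, h⟩)
      (fun h => ⟨Z, h, subset_rfl⟩)) (fun Y => (hc Y.2).1)
    (fun Y => (hc Y.2).2.1.isCompact) (fun Y => (hc Y.2).2.1)

namespace Minimal

variable {M : Set (G → α)} (hM : Minimal (fun Y => Y.Nonempty ∧ IsSubshift Y) M)
include hM

/-- The points of `M` that never enter `U` form a smaller subshift, hence none exist. -/
lemma subset_iUnion_preimage_shift {U : Set (G → α)} (hU : IsOpen U) (hMU : (M ∩ U).Nonempty) :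
    M ⊆ ⋃ g, shift g ⁻¹' U := by
  set W := ⋃ g, shift g ⁻¹' U
  obtain ⟨z, hzM, hzU⟩ := hMU
  by_contra hMW
  have hsub : IsSubshift (M \ W) := by
    refine ⟨hM.prop.2.1.sdiff (isOpen_iUnion fun g => (continuous_shift g).isOpen_preimage _ hU),
      fun g x ⟨hxM, hxW⟩ => ⟨hM.prop.2.2 g x hxM, fun hgx => hxW ?_⟩⟩
    obtain ⟨h, hh⟩ := Set.mem_iUnion.mp hgx
    exact Set.mem_iUnion.mpr ⟨h + g, by rwa [Set.mem_preimage, ← shift_shift]⟩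
  have hMsub : M ⊆ M \ W := hM.le_of_le ⟨Set.sdiff_nonempty.mpr hMW, hsub⟩ Set.sdiff_subset
  exact (hMsub hzM).2 (Set.mem_iUnion.mpr ⟨0, by simpa using hzU⟩)

lemma exists_finset_shift_mem [CompactSpace α] {U : Set (G → α)} (hU : IsOpen U)
    (hMU : (M ∩ U).Nonempty) : ∃ F : Finset G, ∀ z ∈ M, ∃ g ∈ F, shift g z ∈ U := by
  obtain ⟨F, hF⟩ := hM.prop.2.1.isCompact.elim_finite_subcover _
    (fun g => (continuous_shift g).isOpen_preimage _ hU) (hM.subset_iUnion_preimage_shift hU hMU)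
  exact ⟨F, fun z hz => by simpa using hF hz⟩

end Minimal

lemma exists_eqOn_shift_of_mem_closure [DiscreteTopology α] {χ y : G → α}
    (hy : y ∈ closure (Set.range fun g : G => shift g χ)) (F : Finset G) :
    ∃ g, Set.EqOn y (shift g χ) F := by
  have hV : IsOpen {z : G → α | Set.EqOn z y F} := by
    simp only [Set.EqOn, Set.ofPred_forall]
    exact isOpen_biInter_finset fun x _ =>
      (isOpen_discrete {y x}).preimage (continuous_apply (A := fun _ : G => α) x)
  obtain ⟨_, hzy, g, rfl⟩ := mem_closure_iff.mp hy _ hV (Set.eqOn_refl y F)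
  exact ⟨g, hzy.symm⟩

end Shift

lemma exists_syndetic_coloring_of_patterns {G α : Type*} [AddMonoid G] [Finite α]
    (χ : G → α) :
    ∃ y : G → α, (∀ k, (∃ g, y g = k) → ∃ F : Finset G, ∀ h, ∃ g ∈ F, y (g + h) = k) ∧
      ∀ F : Finset G, ∃ g, Set.EqOn y (shift g χ) F := by
  let _ : TopologicalSpace α := ⊥
  have : DiscreteTopology α := ⟨rfl⟩
  obtain ⟨M, hMX, hM⟩ := (isSubshift_closure_range_shift χ).exists_minimal
    ⟨χ, subset_closure ⟨0, shift_zero χ⟩⟩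
  obtain ⟨y, hy⟩ := hM.prop.1
  refine ⟨y, fun k ⟨g₀, hg₀⟩ => ?_, exists_eqOn_shift_of_mem_closure (hMX hy)⟩
  have hU : IsOpen {z : G → α | z 0 = k} :=
    (isOpen_discrete {k}).preimage (continuous_apply (A := fun _ : G => α) 0)
  obtain ⟨F, hF⟩ := hM.exists_finset_shift_mem hU ⟨shift g₀ y, hM.prop.2.2 g₀ y hy, by simpa⟩
  refine ⟨F, fun h => ?_⟩
  obtain ⟨g, hgF, hg⟩ := hF _ (hM.prop.2.2 h y hy)
  exact ⟨g, hgF, by simpa [shift_shift] using hg⟩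

lemma exists_injective_fin_range_eq {X ι : Type*} [Fintype ι] (y : X → ι) :
    ∃ K ≤ Fintype.card ι, ∃ e : Fin K → ι, Function.Injective e ∧ Set.range e = Set.range y := by
  classical
  let R : Finset ι := Finset.univ.filter (· ∈ Set.range y)
  refine ⟨R.card, Finset.card_le_univ R, fun k => R.equivFin.symm k,
    Subtype.val_injective.comp R.equivFin.symm.injective, ?_⟩
  ext i
  constructor
  · rintro ⟨k, rfl⟩
    exact (Finset.mem_filter.mp (R.equivFin.symm k).2).2
  · intro hi
    exact ⟨R.equivFin ⟨i, by simpa [R] using hi⟩, by simp⟩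

lemma IsRieszBasicSequence.of_forall_finset_exists_add_mem {G H : Type*} [AddGroup G]
    [NormedAddCommGroup H] [InnerProductSpace ℂ H] {f : G → H}
    (hf : ∀ (a : G →₀ ℂ) (g : G), ‖a.sum fun n c => c • f (n + g)‖ = ‖a.sum fun n c => c • f n‖)
    {B S : Set G} (hB : IsRieszBasicSequence f B)
    (hS : ∀ F : Finset G, ↑F ⊆ S → ∃ g, ∀ x ∈ F, x + g ∈ B) : IsRieszBasicSequence f S := by
  obtain ⟨c, hc, C, hC, hbounds⟩ := hB
  refine ⟨c, hc, C, hC, fun a ha => ?_⟩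
  obtain ⟨g, hg⟩ := hS a.support ha
  let b := Finsupp.equivMapDomain (Equiv.addRight g) a
  have hsum : (b.sum fun n c => c • f n) = a.sum fun n c => c • f (n + g) :=
    Finsupp.sum_equivMapDomain _ _ _
  have hcoeff : ∑ n ∈ b.support, ‖b n‖ ^ 2 = ∑ n ∈ a.support, ‖a n‖ ^ 2 :=
    Finsupp.sum_equivMapDomain (Equiv.addRight g) a fun _ c => ‖c‖ ^ 2
  have hbB : (b.support : Set G) ⊆ B := by
    intro n hn
    have hna : n + -g ∈ a.support := by simpa [b, Finsupp.equivMapDomain_apply] using hn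
    simpa using hg _ hna
  simpa only [hsum, hf, hcoeff] using hbounds b hbB

section Exponentials

variable {ι : Type*} [Fintype ι]

noncomputable def fourierExp (n : ι → ℤ) (t : ι → ℝ) : ℂ :=
  Complex.exp (2 * Real.pi * Complex.I * ∑ j, (n j : ℂ) * (t j : ℂ))

lemma norm_fourierExp (n : ι → ℤ) (t : ι → ℝ) : ‖fourierExp n t‖ = 1 := by
  have h : 2 * Real.pi * Complex.I * ∑ j, (n j : ℂ) * (t j : ℂ)
      = ((2 * Real.pi * ∑ j, (n j : ℝ) * t j : ℝ) : ℂ) * Complex.I := by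
    push_cast; ring
  rw [fourierExp, h, Complex.norm_exp_ofReal_mul_I]

lemma fourierExp_add (n g : ι → ℤ) (t : ι → ℝ) :
    fourierExp (n + g) t = fourierExp g t * fourierExp n t := by
  simp only [fourierExp, ← Complex.exp_add, Pi.add_apply, Int.cast_add, add_mul,
    Finset.sum_add_distrib]
  ring_nf

lemma norm_finsuppSum_add_eq_of_ae_eq_fourierExp {p : ENNReal} {μ : Measure (ι → ℝ)}
    {f : (ι → ℤ) → Lp ℂ p μ} (hf : ∀ n, f n =ᵐ[μ] fourierExp n) (a : (ι → ℤ) →₀ ℂ)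
    (g : ι → ℤ) : ‖a.sum fun n c => c • f (n + g)‖ = ‖a.sum fun n c => c • f n‖ := by
  have hcoe : ∀ m : (ι → ℤ) → ι → ℤ, ⇑(a.sum fun n c => c • f (m n)) =ᵐ[μ]
      fun t => ∑ n ∈ a.support, a n * fourierExp (m n) t := by
    intro m
    filter_upwards [Lp.coeFn_fun_finsetSum a.support fun n => a n • f (m n),
      (eventually_all_finset a.support).mpr fun n _ => Lp.coeFn_smul (a n) (f (m n)),
      (eventually_all_finset a.support).mpr fun n _ => hf (m n)] with t hsum hsmul hexp
    simp only [Finsupp.sum, hsum]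
    exact Finset.sum_congr rfl fun n hn => by rw [hsmul n hn, Pi.smul_apply, hexp n hn, smul_eq_mul]
  have hcoe₀ := hcoe id
  simp only [id] at hcoe₀
  rw [Lp.norm_def, Lp.norm_def, eLpNorm_congr_ae (hcoe _), eLpNorm_congr_ae hcoe₀]
  refine congrArg _ (eLpNorm_congr_norm_ae (Eventually.of_forall fun t => ?_))
  simp only [fourierExp_add, mul_left_comm _ (fourierExp g t), ← Finset.mul_sum, norm_mul,
    norm_fourierExp, one_mul]

end Exponentials

theorem syndetic_riesz_partition_of_fourier_frame_general
    (N : ℕ) (A : Set (Fin N → ℝ))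
    (f : (Fin N → ℤ) → Lp ℂ 2 (volume.restrict A))
    (hf : ∀ n : Fin N → ℤ,
      (f n : (Fin N → ℝ) → ℂ) =ᵐ[volume.restrict A]
        fun t => Complex.exp (2 * Real.pi * Complex.I * ∑ j, (n j : ℂ) * (t j : ℂ)))
    (L : ℕ) (B : Fin L → Set (Fin N → ℤ))
    (hcover : (⋃ l, B l) = Set.univ)
    (hriesz : ∀ l : Fin L, IsRieszBasicSequence f (B l)) :
    ∃ K : ℕ, K ≤ L ∧ ∃ S : Fin K → Set (Fin N → ℤ),
      (∀ k k' : Fin K, k ≠ k' → Disjoint (S k) (S k')) ∧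
      (⋃ k, S k) = Set.univ ∧
      ∀ k : Fin K, IsSyndeticAdd (S k) ∧ IsRieszBasicSequence f (S k) := by
  choose χ hχ using fun n => Set.mem_iUnion.mp (hcover ▸ Set.mem_univ n : n ∈ ⋃ l, B l)
  obtain ⟨y, hsynd, hpat⟩ := exists_syndetic_coloring_of_patterns χ
  obtain ⟨K, hKL, e, he, hrange⟩ := exists_injective_fin_range_eq y
  refine ⟨K, by simpa using hKL, fun k => y ⁻¹' {e k},
    fun k k' hkk' => (Set.disjoint_singleton.mpr (he.ne hkk')).preimage y, ?_, fun k => ⟨?_, ?_⟩⟩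
  · refine Set.iUnion_eq_univ_iff.mpr fun n => ?_
    obtain ⟨k, hk⟩ : y n ∈ Set.range e := hrange ▸ Set.mem_range_self n
    exact ⟨k, hk.symm⟩
  · exact hsynd _ (hrange ▸ Set.mem_range_self k : e k ∈ Set.range y)
  · refine (hriesz (e k)).of_forall_finset_exists_add_mem
      (norm_finsuppSum_add_eq_of_ae_eq_fourierExp hf) fun F hF => ?_
    obtain ⟨g, hg⟩ := hpat F
    refine ⟨g, fun x hx => ?_⟩
    have hχx : χ (x + g) = e k := (hg hx).symm.trans (hF hx)
    exact hχx ▸ hχ (x + g)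

theorem syndetic_riesz_partition_of_fourier_frame
    (N : ℕ) (A : Set (Fin N → ℝ))
    (hA : A ⊆ Set.Icc 0 1) (hAmeas : MeasurableSet A) (hApos : 0 < volume A)
    (f : (Fin N → ℤ) → Lp ℂ 2 (volume.restrict A))
    (hf : ∀ n : Fin N → ℤ,
      (f n : (Fin N → ℝ) → ℂ) =ᵐ[volume.restrict A]
        fun t => Complex.exp (2 * Real.pi * Complex.I * ∑ j, (n j : ℂ) * (t j : ℂ)))
    (L : ℕ) (B : Fin L → Set (Fin N → ℤ))
    (hdisj : ∀ l l' : Fin L, l ≠ l' → Disjoint (B l) (B l'))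
    (hcover : (⋃ l, B l) = Set.univ)
    (hriesz : ∀ l : Fin L, IsRieszBasicSequence f (B l)) :
    ∃ K : ℕ, K ≤ L ∧ ∃ S : Fin K → Set (Fin N → ℤ),
      (∀ k k' : Fin K, k ≠ k' → Disjoint (S k) (S k')) ∧
      (⋃ k, S k) = Set.univ ∧
      ∀ k : Fin K, IsSyndeticAdd (S k) ∧ IsRieszBasicSequence f (S k) :=
  syndetic_riesz_partition_of_fourier_frame_general N A f hf L B hcover hriesz
end

section
/- Let A and B be unital C*-algebras and let φ : A → B be a unital, completely positive linear map. Suppose C ⊆ A is a C*-subalgebra containing the unit of A such that the restriction of φ to C is a *-homomorphism. Then for every c₁, c₂ ∈ C and every a ∈ A, one has φ(c₁ a c₂) = φ(c₁) φ(a) φ(c₂). -/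
open Matrix

/-- A linear map `φ : A → B` between unital C*-algebras is completely positive if,
for every `n`, the induced map on `n × n` matrices sends positive matrices
(i.e. those of the form `Yᴴ * Y`) to positive matrices. -/
def IsCompletelyPositive
    {A B : Type*} [NormedRing A] [StarRing A] [NormedAlgebra ℂ A]
    [NormedRing B] [StarRing B] [NormedAlgebra ℂ B]
    (φ : A →ₗ[ℂ] B) : Prop :=
  ∀ (n : ℕ) (M : Matrix (Fin n) (Fin n) A),
    (∃ Y : Matrix (Fin n) (Fin n) A, M = Yᴴ * Y) →
    ∃ Z : Matrix (Fin n) (Fin n) B, M.map φ = Zᴴ * Z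

open Finset in
set_option linter.unusedSectionVars false in
set_option maxHeartbeats 1000000 in
/-- The key multiplicative-domain lemma: if `φ (star u * u) = φ (star u) * φ u`, then
`u` left-multiplies and right-multiplies multiplicatively under `φ`. -/
lemma choi_key
    {A B : Type*}
    [NormedRing A] [StarRing A] [CStarRing A] [NormedAlgebra ℂ A]
    [StarModule ℂ A] [CompleteSpace A]
    [NormedRing B] [StarRing B] [CStarRing B] [NormedAlgebra ℂ B]
    [StarModule ℂ B] [CompleteSpace B]
    (φ : A →ₗ[ℂ] B) (hunital : φ 1 = 1) (hcp : IsCompletelyPositive φ)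
    (u : A) (hu : φ (star u * u) = φ (star u) * φ u) (v : A) :
    φ (star u * v) = φ (star u) * φ v ∧ φ (star v * u) = φ (star v) * φ u := by
  classical
  have hMpos : ∃ Y : Matrix (Fin 3) (Fin 3) A,
      (!![1, u, v; star u, star u * u, star u * v; star v, star v * u, star v * v]
        : Matrix (Fin 3) (Fin 3) A) = Yᴴ * Y := by
    refine ⟨!![1, u, v; 0, 0, 0; 0, 0, 0], ?_⟩
    ext i j
    fin_cases i <;> fin_cases j <;>
      simp [Matrix.mul_apply, Fin.sum_univ_three, Matrix.conjTranspose_apply,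
        Matrix.vecHead, Matrix.vecTail]
  obtain ⟨Z, hZ⟩ := hcp 3 _ hMpos
  set S : Matrix (Fin 3) (Fin 2) B := !![-(φ u), -(φ v); 1, 0; 0, 1] with hS
  set W : Matrix (Fin 3) (Fin 2) B := Z * S with hW
  set Q : Matrix (Fin 3) (Fin 3) B :=
    (!![1, u, v; star u, star u * u, star u * v; star v, star v * u, star v * v]
        : Matrix (Fin 3) (Fin 3) A).map φ with hQ
  have hP : Sᴴ * Q * S = Wᴴ * W := by
    rw [hZ, hW, Matrix.conjTranspose_mul]
    simp only [Matrix.mul_assoc]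
  -- entry (0,0)
  have h00 : (Sᴴ * Q * S) 0 0 = 0 := by
    simp [hS, hQ, Matrix.mul_apply, Fin.sum_univ_three, Fin.sum_univ_two,
      Matrix.conjTranspose_apply, Matrix.map_apply, Matrix.vecHead, Matrix.vecTail,
      hunital, hu, mul_add, add_mul]
    abel
  have h01 : (Sᴴ * Q * S) 0 1 = φ (star u * v) - φ (star u) * φ v := by
    simp [hS, hQ, Matrix.mul_apply, Fin.sum_univ_three, Fin.sum_univ_two,
      Matrix.conjTranspose_apply, Matrix.map_apply, Matrix.vecHead, Matrix.vecTail,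
      hunital, mul_add, add_mul, sub_eq_add_neg]
    abel
  have h10 : (Sᴴ * Q * S) 1 0 = φ (star v * u) - φ (star v) * φ u := by
    simp [hS, hQ, Matrix.mul_apply, Fin.sum_univ_three, Fin.sum_univ_two,
      Matrix.conjTranspose_apply, Matrix.map_apply, Matrix.vecHead, Matrix.vecTail,
      hunital, mul_add, add_mul, sub_eq_add_neg]
    abel
  -- positivity: the first column of W vanishes
  letI : CStarAlgebra B := ⟨⟩
  letI := CStarAlgebra.spectralOrder B
  haveI := CStarAlgebra.spectralOrderedRing (A := B)
  have hWcol : ∀ k : Fin 3, W k 0 = 0 := by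
    have hsum : ∑ k : Fin 3, star (W k 0) * W k 0 = 0 := by
      have : (Wᴴ * W) 0 0 = 0 := by rw [← hP]; exact h00
      simpa [Matrix.mul_apply, Matrix.conjTranspose_apply] using this
    intro k
    have hnn : ∀ i ∈ (univ : Finset (Fin 3)), (0 : B) ≤ star (W i 0) * W i 0 :=
      fun i _ => star_mul_self_nonneg _
    have := (Finset.sum_eq_zero_iff_of_nonneg hnn).mp hsum k (mem_univ k)
    exact CStarRing.star_mul_self_eq_zero_iff _ |>.mp this
  constructor
  · have : (Wᴴ * W) 0 1 = 0 := by
      simp [Matrix.mul_apply, Matrix.conjTranspose_apply, hWcol]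
    rw [← hP, h01] at this
    linear_combination (norm := noncomm_ring) this
  · have : (Wᴴ * W) 1 0 = 0 := by
      simp [Matrix.mul_apply, Matrix.conjTranspose_apply, hWcol]
    rw [← hP, h10] at this
    linear_combination (norm := noncomm_ring) this

/-- Choi's multiplicative-domain theorem: if the restriction of a unital completely
positive map `φ` to a unital C*-subalgebra `C` is a *-homomorphism, then
`φ (c₁ * a * c₂) = φ c₁ * φ a * φ c₂` for all `c₁, c₂ ∈ C` and `a ∈ A`. -/
theorem choi_multiplicative_domain
    {A B : Type*}
    [NormedRing A] [StarRing A] [CStarRing A] [NormedAlgebra ℂ A]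
    [StarModule ℂ A] [CompleteSpace A]
    [NormedRing B] [StarRing B] [CStarRing B] [NormedAlgebra ℂ B]
    [StarModule ℂ B] [CompleteSpace B]
    (φ : A →ₗ[ℂ] B) (hunital : φ 1 = 1) (hcp : IsCompletelyPositive φ)
    (C : StarSubalgebra ℂ A)
    (hmul : ∀ c₁ ∈ C, ∀ c₂ ∈ C, φ (c₁ * c₂) = φ c₁ * φ c₂)
    (hstar : ∀ c ∈ C, φ (star c) = star (φ c)) :
    ∀ c₁ ∈ C, ∀ c₂ ∈ C, ∀ a : A, φ (c₁ * a * c₂) = φ c₁ * φ a * φ c₂ := by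
  have hleft : ∀ c ∈ C, ∀ x : A, φ (c * x) = φ c * φ x := by
    intro c hc x
    have hu : φ (star (star c) * star c) = φ (star (star c)) * φ (star c) := by
      simpa using hmul c hc (star c) (star_mem hc)
    simpa using (choi_key φ hunital hcp (star c) hu x).1
  have hright : ∀ c ∈ C, ∀ x : A, φ (x * c) = φ x * φ c := by
    intro c hc x
    have hu : φ (star c * c) = φ (star c) * φ c := hmul (star c) (star_mem hc) c hc
    simpa using (choi_key φ hunital hcp c hu (star x)).2
  intro c₁ hc₁ c₂ hc₂ a
  rw [mul_assoc, hleft c₁ hc₁, hright c₂ hc₂ a, ← mul_assoc]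
end
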